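/- arXiv:2007.12953 — 3 statements merged into one kernel-verified Lean document; each statement's English description precedes it below -/
import Mathlib

section
/- Let F : ℝ² → ℝ be a strictly convex gauge, i.e. F is convex, positively 1-homogeneous, positive on nonzero vectors, and satisfies F(v + w) < F(v) + F(w) whenever v, w are nonzero and do not lie on a common ray (¬ SameRay ℝ v w). Let μ be a finite Borel measure on a measurable space X and let f : X → ℝ² be Bochner integrable with F ∘ f integrable, and suppose there is NO single vector w ∈ ℝ² such that f(x) is a nonnegative multiple of w for μ-almost every x. Then F(∫ f dμ) < ∫ F(f(x)) dμ(x). -/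
/-!
Take a supporting linear functional `ℓ ≤ F` with `ℓ (∫ f) = F (∫ f)` (Hahn–Banach for the sublinear
functional `F`). If `∫ F ∘ f ≤ F (∫ f) = ∫ ℓ ∘ f`, the nonnegative function `F ∘ f - ℓ ∘ f` has
nonpositive integral, so `f` takes values a.e. in the contact set `{F = ℓ}`. Strict subadditivity
forces that contact set onto a single ray: for nonzero `v, w` in it off a common ray,
`F (v + w) < F v + F w = ℓ (v + w) ≤ F (v + w)`.
-/

open MeasureTheory

section Sublinear

variable {E : Type*} [AddCommGroup E] [Module ℝ E] {F : E → ℝ}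

theorem map_add_le_of_convexOn_of_homogeneous (hconv : ConvexOn ℝ Set.univ F)
    (hhom : ∀ c : ℝ, 0 ≤ c → ∀ v, F (c • v) = c * F v) (v w : E) :
    F (v + w) ≤ F v + F w := by
  have hmid := hconv.2 (Set.mem_univ v) (Set.mem_univ w)
    (by norm_num : (0 : ℝ) ≤ 1 / 2) (by norm_num : (0 : ℝ) ≤ 1 / 2) (by norm_num)
  rw [← smul_add, hhom _ (by norm_num), smul_eq_mul, smul_eq_mul] at hmid
  linarith

theorem map_zero_of_homogeneous (hhom : ∀ c : ℝ, 0 ≤ c → ∀ v, F (c • v) = c * F v) :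
    F 0 = 0 := by
  simpa using hhom 0 le_rfl 0

variable (hhom : ∀ c : ℝ, 0 ≤ c → ∀ v, F (c • v) = c * F v)
  (hsub : ∀ v w, F (v + w) ≤ F v + F w)
include hhom hsub

theorem mul_le_map_smul_of_sublinear (c : ℝ) (v : E) : c * F v ≤ F (c • v) := by
  rcases le_or_gt 0 c with hc | hc
  · exact (hhom c hc v).ge
  · have := hsub (c • v) ((-c) • v)
    rw [← add_smul, add_neg_cancel, zero_smul, map_zero_of_homogeneous hhom, hhom (-c) (by linarith)] at this
    linarith

theorem exists_linearMap_le_eq_of_sublinear (v₀ : E) :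
    ∃ ℓ : E →ₗ[ℝ] ℝ, (∀ v, ℓ v ≤ F v) ∧ ℓ v₀ = F v₀ := by
  have hker : ∀ c : ℝ, c • v₀ = 0 → c • F v₀ = 0 := by
    intro c hc
    rcases smul_eq_zero.1 hc with rfl | rfl
    · exact zero_smul ℝ _
    · rw [map_zero_of_homogeneous hhom, smul_zero]
  let ℓ₀ := LinearPMap.mkSpanSingleton' (σ := RingHom.id ℝ) v₀ (F v₀) hker
  have hdom : ∀ z : ℓ₀.domain, ℓ₀ z ≤ F z := by
    rintro ⟨z, hz⟩
    obtain ⟨c, rfl⟩ := Submodule.mem_span_singleton.1 hz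
    rw [LinearPMap.mkSpanSingleton'_apply, RingHom.id_apply, smul_eq_mul]
    exact mul_le_map_smul_of_sublinear hhom hsub c v₀
  obtain ⟨ℓ, hext, hle⟩ :=
    exists_extension_of_le_sublinear ℓ₀ F (fun c hc => hhom c hc.le) hsub hdom
  refine ⟨ℓ, hle, ?_⟩
  rw [hext ⟨v₀, Submodule.mem_span_singleton_self v₀⟩]
  exact LinearPMap.mkSpanSingleton'_apply_self _ _ _ _

end Sublinear

theorem exists_ray_of_linearMap_le_of_strict_subadditive {E : Type*} [AddCommGroup E]
    [Module ℝ E] {F : E → ℝ} {ℓ : E →ₗ[ℝ] ℝ} (hle : ∀ v, ℓ v ≤ F v)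
    (hstrict : ∀ v w, v ≠ 0 → w ≠ 0 → ¬ SameRay ℝ v w → F (v + w) < F v + F w) :
    ∃ w : E, ∀ v, F v = ℓ v → ∃ c : ℝ, 0 ≤ c ∧ v = c • w := by
  by_cases hcontact : ∃ w, w ≠ 0 ∧ F w = ℓ w
  · obtain ⟨w, hw, hFw⟩ := hcontact
    refine ⟨w, fun v hFv => ?_⟩
    rcases eq_or_ne v 0 with rfl | hv
    · exact ⟨0, le_rfl, (zero_smul ℝ w).symm⟩
    have hray : SameRay ℝ w v := by
      by_contra hnot
      have := hle (w + v)
      rw [map_add] at this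
      linarith [hstrict w v hw hv hnot]
    obtain ⟨c, hc, hcw⟩ := hray.exists_pos_left hw hv
    exact ⟨c, hc.le, hcw.symm⟩
  · push Not at hcontact
    refine ⟨0, fun v hFv => ⟨0, le_rfl, ?_⟩⟩
    rw [zero_smul]
    by_contra hv
    exact hcontact v hv hFv

theorem ae_eq_of_forall_le_of_integral_le {X E : Type*} [MeasurableSpace X] {μ : Measure X}
    [NormedAddCommGroup E] [NormedSpace ℝ E] [CompleteSpace E] {F : E → ℝ} {ℓ : E →L[ℝ] ℝ}
    (hle : ∀ v, ℓ v ≤ F v) {f : X → E} (hf : Integrable f μ)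
    (hFf : Integrable (fun x => F (f x)) μ) (hjensen : ∫ x, F (f x) ∂μ ≤ ℓ (∫ x, f x ∂μ)) :
    ∀ᵐ x ∂μ, F (f x) = ℓ (f x) := by
  have hgap : 0 ≤ fun x => F (f x) - ℓ (f x) := fun x => sub_nonneg.2 (hle (f x))
  have hℓf := ℓ.integrable_comp hf
  have hzero : ∫ x, F (f x) - ℓ (f x) ∂μ = 0 := by
    refine le_antisymm ?_ (integral_nonneg hgap)
    rw [integral_sub hFf hℓf, ℓ.integral_comp_comm hf]
    linarith
  filter_upwards [(integral_eq_zero_iff_of_nonneg hgap (hFf.sub hℓf)).1 hzero] with x hx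
  exact sub_eq_zero.1 hx

theorem stmt_2_general
    {X : Type*} [MeasurableSpace X] (μ : Measure X)
    (F : EuclideanSpace ℝ (Fin 2) → ℝ)
    (hconv : ConvexOn ℝ Set.univ F)
    (hhom : ∀ c : ℝ, 0 ≤ c → ∀ v, F (c • v) = c * F v)
    (hstrict : ∀ v w : EuclideanSpace ℝ (Fin 2), v ≠ 0 → w ≠ 0 →
      ¬ SameRay ℝ v w → F (v + w) < F v + F w)
    (f : X → EuclideanSpace ℝ (Fin 2))
    (hf : Integrable f μ)
    (hFf : Integrable (fun x => F (f x)) μ)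
    (hnotray : ¬ ∃ w : EuclideanSpace ℝ (Fin 2),
      ∀ᵐ x ∂μ, ∃ c : ℝ, 0 ≤ c ∧ f x = c • w) :
    F (∫ x, f x ∂μ) < ∫ x, F (f x) ∂μ := by
  by_contra! hjensen
  obtain ⟨ℓ, hle, hsupport⟩ := exists_linearMap_le_eq_of_sublinear hhom
    (map_add_le_of_convexOn_of_homogeneous hconv hhom) (∫ x, f x ∂μ)
  have hcontact : ∀ᵐ x ∂μ, F (f x) = ℓ (f x) :=
    ae_eq_of_forall_le_of_integral_le (ℓ := LinearMap.toContinuousLinearMap ℓ) hle hf hFf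
      (hjensen.trans hsupport.ge)
  obtain ⟨w, hw⟩ := exists_ray_of_linearMap_le_of_strict_subadditive hle hstrict
  exact hnotray ⟨w, hcontact.mono fun x hx => hw (f x) hx⟩

theorem stmt_2
    {X : Type*} [MeasurableSpace X] (μ : Measure X) [IsFiniteMeasure μ]
    (F : EuclideanSpace ℝ (Fin 2) → ℝ)
    (hconv : ConvexOn ℝ Set.univ F)
    (hhom : ∀ c : ℝ, 0 ≤ c → ∀ v, F (c • v) = c * F v)
    (hpos : ∀ v : EuclideanSpace ℝ (Fin 2), v ≠ 0 → 0 < F v)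
    (hstrict : ∀ v w : EuclideanSpace ℝ (Fin 2), v ≠ 0 → w ≠ 0 →
      ¬ SameRay ℝ v w → F (v + w) < F v + F w)
    (f : X → EuclideanSpace ℝ (Fin 2))
    (hf : Integrable f μ)
    (hFf : Integrable (fun x => F (f x)) μ)
    (hnotray : ¬ ∃ w : EuclideanSpace ℝ (Fin 2),
      ∀ᵐ x ∂μ, ∃ c : ℝ, 0 ≤ c ∧ f x = c • w) :
    F (∫ x, f x ∂μ) < ∫ x, F (f x) ∂μ :=
  stmt_2_general μ F hconv hhom hstrict f hf hFf hnotray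
end

section
/- Let F : ℝ² → ℝ be a strictly convex gauge, i.e. F is convex, positively 1-homogeneous, positive on nonzero vectors, and satisfies F(v + w) < F(v) + F(w) whenever v, w are nonzero and do not lie on a common ray (¬ SameRay ℝ v w). Fix x₁ ≠ x₂ in ℝ². Then the infimum of ∫₀¹ F(γ'(t)) dt over all continuously differentiable curves γ : [0,1] → ℝ² with γ(0) = x₁ and γ(1) = x₂ equals F(x₂ − x₁), the affine parametrization t ↦ (1−t)x₁ + t x₂ attains this infimum, and every continuously differentiable minimizer has image contained in the segment [x₁, x₂]. -/
/-!
Jensen's inequality on a subinterval `[a, b]`, combined with the positive homogeneity of `F` and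
the fundamental theorem of calculus, gives `F (γ b - γ a) ≤ ∫ a..b, F (γ')`. Taking `[a, b] = [0, 1]`
shows that the straight segment, whose energy is exactly `F (x₂ - x₁)`, is a minimizer. If `γ` is a
minimizer and `0 ≤ t ≤ 1`, splitting the energy at `t` gives
`F (γ t - x₁) + F (x₂ - γ t) ≤ F (x₂ - x₁)`, and strict convexity forces `γ t - x₁` and `x₂ - γ t`
onto a common ray, i.e. `γ t ∈ [x₁, x₂]`.
-/

open intervalIntegral Set MeasureTheory
open scoped Interval

section Energy

variable {E : Type*} [NormedAddCommGroup E] [NormedSpace ℝ E] {F : E → ℝ}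

theorem ConvexOn.map_intervalIntegral_le [FiniteDimensional ℝ E] (hconv : ConvexOn ℝ univ F)
    (hhom : ∀ c : ℝ, 0 ≤ c → ∀ v, F (c • v) = c * F v) {f : ℝ → E} {a b : ℝ} (hab : a ≤ b)
    (hf : ContinuousOn f (Icc a b)) :
    F (∫ t in a..b, f t) ≤ ∫ t in a..b, F (f t) := by
  have hFcont : Continuous F := continuousOn_univ.mp (hconv.continuousOn isOpen_univ)
  rcases hab.eq_or_lt with rfl | hlt
  · simpa using (hhom 0 le_rfl 0).le
  have hvol : volume (Ι a b) = ENNReal.ofReal (b - a) := by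
    rw [uIoc_of_le hab, Real.volume_Ioc]
  have hjensen : F (⨍ t in a..b, f t) ≤ ⨍ t in a..b, F (f t) := by
    refine hconv.map_set_average_le hFcont.continuousOn isClosed_univ ?_ ?_
      (by simp) ?_ ?_
    · simpa [hvol] using hlt
    · simp [hvol]
    · exact (hf.intervalIntegrable_of_Icc hab).def'
    · exact ((hFcont.comp_continuousOn hf).intervalIntegrable_of_Icc hab).def'
  rw [interval_average_eq, interval_average_eq, hhom _ (inv_nonneg.mpr (sub_nonneg.mpr hab)),
    smul_eq_mul] at hjensen
  exact le_of_mul_le_mul_left hjensen (inv_pos.mpr (sub_pos.mpr hlt))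

theorem integral_derivWithin_eq_sub_of_Icc_subset [CompleteSpace E] {γ : ℝ → E} {p q a b : ℝ}
    (hγ : ContDiffOn ℝ 1 γ (Icc p q)) (hab : a ≤ b) (hsub : Icc a b ⊆ Icc p q) :
    ∫ t in a..b, derivWithin γ (Icc p q) t = γ b - γ a := by
  rw [← integral_deriv_of_contDiffOn_Icc (hγ.mono hsub) hab, integral_of_le hab,
    integral_of_le hab, ← restrict_Ioo_eq_restrict_Ioc]
  refine integral_congr_ae ?_
  filter_upwards [self_mem_ae_restrict measurableSet_Ioo] with t ht
  exact derivWithin_of_mem_nhds (Filter.mem_of_superset (Ioo_mem_nhds ht.1 ht.2)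
    (Ioo_subset_Icc_self.trans hsub))

theorem map_sub_le_integral_derivWithin [FiniteDimensional ℝ E] (hconv : ConvexOn ℝ univ F)
    (hhom : ∀ c : ℝ, 0 ≤ c → ∀ v, F (c • v) = c * F v) {γ : ℝ → E} {p q a b : ℝ} (hpq : p < q)
    (hγ : ContDiffOn ℝ 1 γ (Icc p q)) (hab : a ≤ b) (hsub : Icc a b ⊆ Icc p q) :
    F (γ b - γ a) ≤ ∫ t in a..b, F (derivWithin γ (Icc p q) t) := by
  rw [← integral_derivWithin_eq_sub_of_Icc_subset hγ hab hsub]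
  exact hconv.map_intervalIntegral_le hhom hab
    ((hγ.continuousOn_derivWithin (uniqueDiffOn_Icc hpq) le_rfl).mono hsub)

theorem map_sub_add_map_sub_le_integral_derivWithin [FiniteDimensional ℝ E]
    (hconv : ConvexOn ℝ univ F) (hhom : ∀ c : ℝ, 0 ≤ c → ∀ v, F (c • v) = c * F v)
    {γ : ℝ → E} {p q t : ℝ} (hpq : p < q)
    (hγ : ContDiffOn ℝ 1 γ (Icc p q)) (ht : t ∈ Icc p q) :
    F (γ t - γ p) + F (γ q - γ t) ≤ ∫ s in p..q, F (derivWithin γ (Icc p q) s) := by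
  have hint : IntervalIntegrable (fun s ↦ F (derivWithin γ (Icc p q) s)) volume p q :=
    ((continuousOn_univ.mp (hconv.continuousOn isOpen_univ)).comp_continuousOn
      (hγ.continuousOn_derivWithin (uniqueDiffOn_Icc hpq) le_rfl)).intervalIntegrable_of_Icc
      hpq.le
  rw [← integral_add_adjacent_intervals (hint.mono_set ?_) (hint.mono_set ?_)]
  · exact add_le_add
      (map_sub_le_integral_derivWithin hconv hhom hpq hγ ht.1 (Icc_subset_Icc_right ht.2))
      (map_sub_le_integral_derivWithin hconv hhom hpq hγ ht.2 (Icc_subset_Icc_left ht.1))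
  · rw [uIcc_of_le ht.1, uIcc_of_le hpq.le]; exact Icc_subset_Icc_right ht.2
  · rw [uIcc_of_le ht.2, uIcc_of_le hpq.le]; exact Icc_subset_Icc_left ht.1

theorem integral_map_derivWithin_lineMap (x y : E) {p q : ℝ} (hpq : p < q) :
    ∫ t in p..q, F (derivWithin (AffineMap.lineMap x y) (Icc p q) t) = (q - p) * F (y - x) := by
  rw [integral_congr (g := fun _ ↦ F (y - x)), intervalIntegral.integral_const, smul_eq_mul]
  intro t ht
  rw [uIcc_of_le hpq.le] at ht
  simp only [AffineMap.hasDerivWithinAt_lineMap.derivWithin (uniqueDiffOn_Icc hpq t ht)]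

end Energy

theorem sameRay_of_add_le_map_add {E : Type*} [AddCommGroup E] [Module ℝ E] {F : E → ℝ}
    (hstrict : ∀ v w : E, v ≠ 0 → w ≠ 0 → ¬ SameRay ℝ v w → F (v + w) < F v + F w)
    {v w : E} (h : F v + F w ≤ F (v + w)) : SameRay ℝ v w := by
  by_contra hvw
  have hv : v ≠ 0 := fun hv ↦ hvw (hv ▸ .zero_left w)
  have hw : w ≠ 0 := fun hw ↦ hvw (hw ▸ .zero_right v)
  exact (hstrict v w hv hw hvw).not_ge h

theorem mem_segment_of_add_le_map_sub {E : Type*} [AddCommGroup E] [Module ℝ E] {F : E → ℝ}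
    (hstrict : ∀ v w : E, v ≠ 0 → w ≠ 0 → ¬ SameRay ℝ v w → F (v + w) < F v + F w)
    {x₁ x₂ y : E} (h : F (y - x₁) + F (x₂ - y) ≤ F (x₂ - x₁)) : y ∈ segment ℝ x₁ x₂ := by
  rw [mem_segment_iff_sameRay]
  refine sameRay_of_add_le_map_add hstrict ?_
  rwa [sub_add_sub_cancel']

theorem stmt_7_general
    (F : EuclideanSpace ℝ (Fin 2) → ℝ)
    (hconv : ConvexOn ℝ Set.univ F)
    (hhom : ∀ c : ℝ, 0 ≤ c → ∀ v, F (c • v) = c * F v)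
    (hstrict : ∀ v w : EuclideanSpace ℝ (Fin 2), v ≠ 0 → w ≠ 0 →
      ¬ SameRay ℝ v w → F (v + w) < F v + F w)
    (x₁ x₂ : EuclideanSpace ℝ (Fin 2)) :
    IsLeast
      {e : ℝ | ∃ γ : ℝ → EuclideanSpace ℝ (Fin 2),
        ContDiffOn ℝ 1 γ (Set.Icc 0 1) ∧ γ 0 = x₁ ∧ γ 1 = x₂ ∧
        e = ∫ t in (0:ℝ)..1, F (derivWithin γ (Set.Icc 0 1) t)}
      (F (x₂ - x₁)) ∧
    (∫ t in (0:ℝ)..1,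
        F (derivWithin (fun s => (1 - s) • x₁ + s • x₂) (Set.Icc 0 1) t))
      = F (x₂ - x₁) ∧
    (∀ γ : ℝ → EuclideanSpace ℝ (Fin 2),
      ContDiffOn ℝ 1 γ (Set.Icc 0 1) → γ 0 = x₁ → γ 1 = x₂ →
      (∫ t in (0:ℝ)..1, F (derivWithin γ (Set.Icc 0 1) t)) = F (x₂ - x₁) →
      γ '' Set.Icc (0:ℝ) 1 ⊆ segment ℝ x₁ x₂) := by
  have hline : (fun s : ℝ ↦ (1 - s) • x₁ + s • x₂) = AffineMap.lineMap x₁ x₂ := by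
    ext1 s; rw [AffineMap.lineMap_apply_module]
  have hline_energy : ∫ t in (0:ℝ)..1,
      F (derivWithin (fun s ↦ (1 - s) • x₁ + s • x₂) (Icc 0 1) t) = F (x₂ - x₁) := by
    rw [hline, integral_map_derivWithin_lineMap x₁ x₂ one_pos, sub_zero, one_mul]
  refine ⟨⟨⟨_, ?_, by simp, by simp, hline_energy.symm⟩, ?_⟩, hline_energy, ?_⟩
  · rw [hline]; exact (AffineMap.contDiff_lineMap x₁ x₂).contDiffOn
  · rintro e ⟨γ, hγ, rfl, rfl, rfl⟩
    exact map_sub_le_integral_derivWithin hconv hhom one_pos hγ zero_le_one subset_rfl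
  · rintro γ hγ rfl rfl hmin _ ⟨t, ht, rfl⟩
    refine mem_segment_of_add_le_map_sub hstrict ?_
    rw [← hmin]
    exact map_sub_add_map_sub_le_integral_derivWithin hconv hhom one_pos hγ ht

theorem stmt_7
    (F : EuclideanSpace ℝ (Fin 2) → ℝ)
    (hconv : ConvexOn ℝ Set.univ F)
    (hhom : ∀ c : ℝ, 0 ≤ c → ∀ v, F (c • v) = c * F v)
    (hpos : ∀ v : EuclideanSpace ℝ (Fin 2), v ≠ 0 → 0 < F v)
    (hstrict : ∀ v w : EuclideanSpace ℝ (Fin 2), v ≠ 0 → w ≠ 0 →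
      ¬ SameRay ℝ v w → F (v + w) < F v + F w)
    (x₁ x₂ : EuclideanSpace ℝ (Fin 2)) (hx : x₁ ≠ x₂) :
    IsLeast
      {e : ℝ | ∃ γ : ℝ → EuclideanSpace ℝ (Fin 2),
        ContDiffOn ℝ 1 γ (Set.Icc 0 1) ∧ γ 0 = x₁ ∧ γ 1 = x₂ ∧
        e = ∫ t in (0:ℝ)..1, F (derivWithin γ (Set.Icc 0 1) t)}
      (F (x₂ - x₁)) ∧
    (∫ t in (0:ℝ)..1,
        F (derivWithin (fun s => (1 - s) • x₁ + s • x₂) (Set.Icc 0 1) t))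
      = F (x₂ - x₁) ∧
    (∀ γ : ℝ → EuclideanSpace ℝ (Fin 2),
      ContDiffOn ℝ 1 γ (Set.Icc 0 1) → γ 0 = x₁ → γ 1 = x₂ →
      (∫ t in (0:ℝ)..1, F (derivWithin γ (Set.Icc 0 1) t)) = F (x₂ - x₁) →
      γ '' Set.Icc (0:ℝ) 1 ⊆ segment ℝ x₁ x₂) :=
  stmt_7_general F hconv hhom hstrict x₁ x₂
end

section
/- Let K ⊆ ℝⁿ be a nonempty compact connected set with finite one-dimensional Hausdorff measure, H¹(K) < ∞. Then there exists a Lipschitz map f : [0,1] → ℝⁿ whose image is exactly K. -/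
/-!
For `ε > 0` let `S` be a maximal `ε`-separated subset of `K`. Since `K` is connected, every
proper part of `S` lies within `2ε` of the rest, so a walk with steps `≤ 2ε` visits all of `S`
in fewer than `2 #S` steps (insert a detour `a → b → a` for each new point `b`). Connectedness
also gives each ball of radius `ε / 2` about a point of `S` an `H¹`-mass at least `ε / 2`
(its distance to the centre takes every value in `[0, ε / 2]`); the balls are disjoint, so
`#S ε ≤ 2 H¹(K)`. Reading the walk off at equally spaced times in `[0, 1]` gives step maps
`[0, 1] → K` that are `8 H¹(K)`-Lipschitz up to an additive error `2ε` and `ε`-dense in `K`.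
Their pointwise limit along an ultrafilter is a Lipschitz map onto `K`.
-/

open MeasureTheory Metric Set Filter Topology
open scoped NNReal ENNReal Finset

theorem List.IsChain.exists_insert_of_mem {α : Type*} {r : α → α → Prop} {l : List α}
    (hl : l.IsChain r) {a b : α} (ha : a ∈ l) (hab : r a b) (hba : r b a) :
    ∃ l' : List α, l'.IsChain r ∧ (∀ x, x ∈ l' ↔ x = b ∨ x ∈ l) ∧ l'.length = l.length + 2 := by
  obtain ⟨l₁, l₂, rfl⟩ := List.append_of_mem ha
  refine ⟨l₁ ++ a :: b :: a :: l₂, ?_, fun x => ?_, by simp; omega⟩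
  · rw [List.isChain_split] at hl ⊢
    simp_all
  · simp only [List.mem_append, List.mem_cons]
    tauto

theorem Finset.exists_spanning_isChain {α : Type*} {r : α → α → Prop}
    (hr : ∀ a b, r a b → r b a) {S : Finset α} (hS : S.Nonempty)
    (hcut : ∀ T ⊆ S, T.Nonempty → T ≠ S → ∃ a ∈ T, ∃ b ∈ S, b ∉ T ∧ r a b) :
    ∃ l : List α, l ≠ [] ∧ l.IsChain r ∧ (∀ x, x ∈ l ↔ x ∈ S) ∧ l.length < 2 * #S := by
  classical
  let Walkable : Finset α → Prop := fun T =>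
    ∃ l : List α, l ≠ [] ∧ l.IsChain r ∧ (∀ x, x ∈ l ↔ x ∈ T) ∧ l.length < 2 * #T
  obtain ⟨s, hs⟩ := hS
  obtain ⟨T, hT, hmax⟩ := (S.powerset.filter Walkable).exists_max_image card
    ⟨{s}, Finset.mem_filter.2 ⟨by simpa using hs, [s], by simp⟩⟩
  obtain ⟨hTS, l, hl, hchain, hmem, hlen⟩ : T ⊆ S ∧ Walkable T := by simpa using hT
  suffices T = S from this ▸ ⟨l, hl, hchain, hmem, hlen⟩
  by_contra hne
  have hTne : T.Nonempty := by
    obtain ⟨x, hx⟩ := List.exists_mem_of_ne_nil l hl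
    exact ⟨x, (hmem x).1 hx⟩
  obtain ⟨a, haT, b, hbS, hbT, hab⟩ := hcut T hTS hTne hne
  obtain ⟨l', hchain', hmem', hlen'⟩ :=
    hchain.exists_insert_of_mem ((hmem a).2 haT) hab (hr a b hab)
  have hwalk : Walkable (insert b T) :=
    ⟨l', List.ne_nil_of_length_pos (by omega), hchain', fun x => by simp [hmem', hmem],
      by rw [Finset.card_insert_of_notMem hbT]; omega⟩
  have := hmax (insert b T) (by simpa [Finset.insert_subset_iff, hbS, hTS] using hwalk)
  rw [Finset.card_insert_of_notMem hbT] at this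
  omega

theorem List.IsChain.dist_getD_le {E : Type*} [PseudoMetricSpace E] {l : List E} {δ : ℝ}
    (hl : l.IsChain (fun a b => dist a b ≤ δ)) (x₀ : E) {i j : ℕ} (hij : i ≤ j)
    (hj : j < l.length) : dist (l.getD i x₀) (l.getD j x₀) ≤ δ * (j - i) := by
  have := dist_le_Ico_sum_of_dist_le (f := fun k => l.getD k x₀) hij (d := fun _ => δ)
    fun {k} _ hk => by
      simp only [List.getD_eq_getElem _ _ (show k < l.length by omega),
        List.getD_eq_getElem _ _ (show k + 1 < l.length by omega)]
      exact List.isChain_iff_getElem.1 hl k (by omega)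
  simpa [Nat.cast_sub hij, mul_comm] using this

theorem List.IsChain.exists_curve {E : Type*} [PseudoMetricSpace E] {l : List E} (hl : l ≠ [])
    {δ : ℝ} (hδ : 0 ≤ δ) (hchain : l.IsChain (fun a b => dist a b ≤ δ)) :
    ∃ g : ℝ → E, (∀ t ∈ Icc (0 : ℝ) 1, g t ∈ l) ∧ (∀ x ∈ l, ∃ t ∈ Icc (0 : ℝ) 1, g t = x) ∧
      ∀ s ∈ Icc (0 : ℝ) 1, ∀ t ∈ Icc (0 : ℝ) 1,
        dist (g s) (g t) ≤ δ * (l.length - 1) * dist s t + δ := by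
  obtain ⟨m, hm⟩ : ∃ m, l.length = m + 1 := Nat.exists_eq_succ_of_ne_zero (by simpa using hl)
  have hidx : ∀ t ∈ Icc (0 : ℝ) 1, ⌊t * m⌋₊ < l.length := fun t ht => by
    have : t * m ≤ m := mul_le_of_le_one_left (Nat.cast_nonneg m) ht.2
    exact hm ▸ Nat.lt_succ_of_le (Nat.floor_le_of_le this)
  refine ⟨fun t => l.getD ⌊t * m⌋₊ (l.head hl), fun t ht => ?_, fun x hx => ?_, ?_⟩
  · simpa only [List.getD_eq_getElem _ _ (hidx t ht)] using List.getElem_mem _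
  · obtain ⟨i, hi, rfl⟩ := List.getElem_of_mem hx
    refine ⟨i / m, ⟨by positivity, div_le_one_of_le₀ (by norm_cast; omega) (by positivity)⟩, ?_⟩
    have : ⌊(i / m : ℝ) * m⌋₊ = i := by
      rcases Nat.eq_zero_or_pos m with h | h
      · simp [h]; omega
      · rw [div_mul_cancel₀ _ (by positivity), Nat.floor_natCast]
    simp [this, hi]
  intro s hs t ht
  wlog hst : ⌊s * m⌋₊ ≤ ⌊t * m⌋₊ generalizing s t with H
  · rw [dist_comm, dist_comm s]
    exact H t ht s hs (le_of_not_ge hst)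
  have hfloor : (⌊t * m⌋₊ : ℝ) - ⌊s * m⌋₊ ≤ m * dist s t + 1 := by
    have h1 := Nat.floor_le (mul_nonneg ht.1 (Nat.cast_nonneg m))
    have h2 := Nat.lt_floor_add_one (s * m)
    have h3 : (t - s) * m ≤ dist s t * m :=
      mul_le_mul_of_nonneg_right (by rw [dist_comm]; exact le_abs_self _) (Nat.cast_nonneg m)
    linarith
  calc _ ≤ δ * ((⌊t * m⌋₊ : ℝ) - ⌊s * m⌋₊) := hchain.dist_getD_le _ hst (hidx t ht)
    _ ≤ δ * (m * dist s t + 1) := mul_le_mul_of_nonneg_left hfloor hδ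
    _ = δ * (l.length - 1) * dist s t + δ := by rw [hm]; push_cast; ring

theorem IsCompact.packingNumber_ne_top {X : Type*} [PseudoEMetricSpace X] {K : Set X}
    (hK : IsCompact K) {ε : ℝ≥0} (hε : ε ≠ 0) : packingNumber ε K ≠ ⊤ := by
  obtain ⟨N, -, hNfin, hN⟩ :=
    exists_finite_isCover_of_isCompact (ε := ε / 2) (by simpa using hε) hK
  have := packingNumber_two_mul_le_externalCoveringNumber (ε / 2) K
  rw [mul_div_cancel₀ _ two_ne_zero] at this
  exact ne_top_of_le_ne_top hNfin.encard_lt_top.ne (this.trans hN.externalCoveringNumber_le_encard)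

theorem IsPreconnected.exists_dist_le_of_isCover {X : Type*} [PseudoMetricSpace X] {K : Set X}
    (hK : IsPreconnected K) {S : Finset X} (hSK : ↑S ⊆ K) {ε : ℝ≥0} (hcov : IsCover ε K S)
    {T : Finset X} (hTS : T ⊆ S) (hT : T.Nonempty) (hTS' : T ≠ S) :
    ∃ a ∈ T, ∃ b ∈ S, b ∉ T ∧ dist a b ≤ 2 * ε := by
  classical
  obtain ⟨a, haT⟩ := hT
  obtain ⟨b, hbS, hbT⟩ := Finset.exists_of_ssubset (hTS.ssubset_of_ne hTS')
  have hKcov := hcov.subset_iUnion_closedBall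
  obtain ⟨z, hzK, hzT, hzS⟩ := isPreconnected_closed_iff.1 hK
    (⋃ p ∈ T, closedBall p ε) (⋃ p ∈ S \ T, closedBall p ε)
    (isClosed_biUnion_finset fun _ _ => isClosed_closedBall)
    (isClosed_biUnion_finset fun _ _ => isClosed_closedBall)
    (fun z hz => by
      obtain ⟨p, hpS, hzp⟩ := mem_iUnion₂.1 (hKcov hz)
      by_cases hpT : p ∈ T
      · exact Or.inl (mem_biUnion hpT hzp)
      · exact Or.inr (mem_biUnion (Finset.mem_sdiff.2 ⟨hpS, hpT⟩) hzp))
    ⟨a, hSK (hTS haT), mem_biUnion haT (mem_closedBall_self ε.2)⟩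
    ⟨b, hSK hbS, mem_biUnion (Finset.mem_sdiff.2 ⟨hbS, hbT⟩) (mem_closedBall_self ε.2)⟩
  obtain ⟨p, hpT, hzp⟩ := mem_iUnion₂.1 hzT
  obtain ⟨q, hq, hzq⟩ := mem_iUnion₂.1 hzS
  obtain ⟨hqS, hqT⟩ := Finset.mem_sdiff.1 hq
  refine ⟨p, hpT, q, hqS, hqT, ?_⟩
  calc dist p q ≤ dist z p + dist z q := dist_triangle_left p q z
    _ ≤ 2 * ε := by rw [mem_closedBall] at hzp hzq; linarith

section Hausdorff

variable {X : Type*} [MetricSpace X] [MeasurableSpace X] [BorelSpace X]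

theorem IsPreconnected.ofReal_le_hausdorffMeasure_inter_closedBall {K : Set X}
    (hK : IsPreconnected K) {x y : X} (hx : x ∈ K) (hy : y ∈ K) {r : ℝ} (hr : r ≤ dist y x) :
    ENNReal.ofReal r ≤ μH[1] (K ∩ closedBall x r) := by
  have hlip : LipschitzWith 1 (dist · x) := LipschitzWith.dist_left x
  have hIcc : Icc 0 r ⊆ (dist · x) '' (K ∩ closedBall x r) := by
    intro u hu
    obtain ⟨w, hwK, hwu⟩ := (hK.image _ hlip.continuous.continuousOn).Icc_subset
      (mem_image_of_mem _ hx) (mem_image_of_mem _ hy) ⟨by simpa using hu.1, hu.2.trans hr⟩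
    exact ⟨w, ⟨hwK, mem_closedBall.2 (hwu.trans_le hu.2)⟩, hwu⟩
  calc ENNReal.ofReal r = μH[1] (Icc 0 r) := by
        rw [hausdorffMeasure_real, Real.volume_Icc, sub_zero]
    _ ≤ μH[1] ((dist · x) '' (K ∩ closedBall x r)) := measure_mono hIcc
    _ ≤ μH[1] (K ∩ closedBall x r) := by
      simpa using hlip.hausdorffMeasure_image_le zero_le_one (K ∩ closedBall x r)

theorem IsPreconnected.card_mul_le_hausdorffMeasure {K : Set X} (hK : IsPreconnected K)
    {S : Finset X} (hSK : ↑S ⊆ K) {ε : ℝ≥0} (hS : IsSeparated ε (S : Set X)) (hS2 : 1 < #S) :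
    #S * ENNReal.ofReal (ε / 2) ≤ μH[1] K := by
  have hsep : ∀ p ∈ S, ∀ q ∈ S, p ≠ q → (ε : ℝ) < dist p q := fun p hp q hq hpq => by
    simpa [edist_dist] using hS hp hq hpq
  set ν := (μH[1] : Measure X).restrict K
  have hball : ∀ p ∈ S, ENNReal.ofReal (ε / 2) ≤ ν (closedBall p (ε / 2)) := by
    intro p hp
    obtain ⟨q, hq, hqp⟩ := S.exists_mem_ne hS2 p
    rw [Measure.restrict_apply measurableSet_closedBall, inter_comm]
    exact hK.ofReal_le_hausdorffMeasure_inter_closedBall (hSK hp) (hSK hq)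
      (by linarith [hsep q hq p hp hqp, ε.2])
  have hdisj : (S : Set X).PairwiseDisjoint (closedBall · (ε / 2)) := fun p hp q hq hpq =>
    closedBall_disjoint_closedBall (by linarith [hsep p hp q hq hpq])
  calc #S * ENNReal.ofReal (ε / 2) = ∑ _p ∈ S, ENNReal.ofReal (ε / 2) := by simp
    _ ≤ ∑ p ∈ S, ν (closedBall p (ε / 2)) := Finset.sum_le_sum hball
    _ = ν (⋃ p ∈ S, closedBall p (ε / 2)) :=
      (measure_biUnion_finset hdisj fun _ _ => measurableSet_closedBall).symm
    _ ≤ ν univ := measure_mono (subset_univ _)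
    _ = μH[1] K := Measure.restrict_apply_univ _

theorem IsCompact.exists_approx_curve {K : Set X} (hK : IsCompact K) (hconn : IsConnected K)
    (hfin : μH[1] K ≠ ⊤) {ε : ℝ≥0} (hε : 0 < ε) :
    ∃ g : ℝ → X, (∀ t ∈ Icc (0 : ℝ) 1, g t ∈ K) ∧
      (∀ z ∈ K, ∃ t ∈ Icc (0 : ℝ) 1, dist z (g t) ≤ ε) ∧
      ∀ s ∈ Icc (0 : ℝ) 1, ∀ t ∈ Icc (0 : ℝ) 1,
        dist (g s) (g t) ≤ 8 * (μH[1] K).toReal * dist s t + 2 * ε := by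
  have hpack := hK.packingNumber_ne_top hε.ne'
  have hfinite : (maximalSeparatedSet ε K).Finite :=
    Set.encard_ne_top_iff.1 (by rwa [encard_maximalSeparatedSet hpack])
  set S := hfinite.toFinset
  have hSK : ↑S ⊆ K := by simpa [S] using maximalSeparatedSet_subset
  have hsep : IsSeparated ε (S : Set X) := by simpa [S] using isSeparated_maximalSeparatedSet
  have hcov : IsCover ε K S := by simpa [S] using isCover_maximalSeparatedSet hpack
  have hSne : S.Nonempty := by simpa using hcov.nonempty hconn.nonempty
  obtain ⟨l, hl, hchain, hmem, hlen⟩ := Finset.exists_spanning_isChain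
    (r := fun a b => dist a b ≤ 2 * ε) (fun a b h => by rwa [dist_comm]) hSne
    fun T hTS hT hTS' => hconn.isPreconnected.exists_dist_le_of_isCover hSK hcov hTS hT hTS'
  obtain ⟨g, hgl, hlg, hgdist⟩ := hchain.exists_curve hl (by positivity)
  have hspeed : 2 * ε * ((l.length : ℝ) - 1) ≤ 8 * (μH[1] K).toReal := by
    rcases (Nat.one_le_iff_ne_zero.2 (Finset.card_ne_zero.2 hSne)).eq_or_lt with h1 | h2
    · have : l.length = 1 := by have := List.length_pos_iff.2 hl; omega
      simp [this]
    · have hpk := ENNReal.toReal_mono hfin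
        (hconn.isPreconnected.card_mul_le_hausdorffMeasure hSK hsep h2)
      rw [ENNReal.toReal_mul, ENNReal.toReal_ofReal (by positivity)] at hpk
      have : (l.length : ℝ) ≤ 2 * #S := by exact_mod_cast hlen.le
      simp only [ENNReal.toReal_natCast] at hpk
      nlinarith [ε.2]
  refine ⟨g, fun t ht => hSK ((hmem _).1 (hgl t ht)), fun z hz => ?_, fun s hs t ht => ?_⟩
  · obtain ⟨p, hpS, hzp⟩ := hcov.subset_iUnion_closedBall hz |> mem_iUnion₂.1
    obtain ⟨t, ht, rfl⟩ := hlg p ((hmem p).2 hpS)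
    exact ⟨t, ht, hzp⟩
  · calc dist (g s) (g t) ≤ 2 * ε * ((l.length : ℝ) - 1) * dist s t + 2 * ε :=
          hgdist s hs t ht
      _ ≤ 8 * (μH[1] K).toReal * dist s t + 2 * ε := by gcongr

end Hausdorff

theorem exists_lipschitzOnWith_image_eq_of_tendsto {X Y : Type*} [PseudoMetricSpace X]
    [MetricSpace Y] {A : Set X} (hA : IsCompact A) {K : Set Y} (hK : IsCompact K) {L : ℝ≥0}
    (g : ℕ → X → Y) {δ : ℕ → ℝ} (hδ : Tendsto δ atTop (𝓝 0)) (hgK : ∀ n, ∀ t ∈ A, g n t ∈ K)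
    (hcov : ∀ n, ∀ z ∈ K, ∃ t ∈ A, dist z (g n t) ≤ δ n)
    (hlip : ∀ n, ∀ s ∈ A, ∀ t ∈ A, dist (g n s) (g n t) ≤ L * dist s t + δ n) :
    ∃ f : X → Y, LipschitzOnWith L f A ∧ f '' A = K := by
  -- Pointwise limits along a free ultrafilter exist at every point of `A` simultaneously.
  let U := hyperfilter ℕ
  have hδU : Tendsto δ U (𝓝 0) := hδ.mono_left Nat.hyperfilter_le_atTop
  have hlim : ∀ t ∈ A, ∃ y ∈ K, Tendsto (g · t) U (𝓝 y) := fun t ht =>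
    hK.ultrafilter_le_nhds' (U.map (g · t))
      (Ultrafilter.mem_map.2 (univ_mem' fun n => hgK n t ht))
  classical
  let f : X → Y := fun t => if ht : t ∈ A then (hlim t ht).choose else g 0 t
  have hfK : ∀ t ∈ A, f t ∈ K := fun t ht => by simpa [f, ht] using (hlim t ht).choose_spec.1
  have hf : ∀ t ∈ A, Tendsto (g · t) U (𝓝 (f t)) := fun t ht => by
    simpa [f, ht] using (hlim t ht).choose_spec.2
  have hflip : LipschitzOnWith L f A := LipschitzOnWith.of_dist_le_mul fun s hs t ht =>
    le_of_tendsto_of_tendsto ((hf s hs).dist (hf t ht))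
      (by simpa using (hδU.const_add (L * dist s t)))
      (Eventually.of_forall fun n => hlip n s hs t ht)
  refine ⟨f, hflip, (image_subset_iff.2 hfK).antisymm fun z hz => ?_⟩
  choose t htA htz using fun n => hcov n z hz
  obtain ⟨t₀, ht₀, ht⟩ : ∃ t₀ ∈ A, Tendsto t U (𝓝 t₀) :=
    hA.ultrafilter_le_nhds' (U.map t) (Ultrafilter.mem_map.2 (univ_mem' htA))
  have hbound : ∀ n, dist z (f t₀) ≤ δ n + (L * dist (t n) t₀ + δ n) + dist (g n t₀) (f t₀) :=
    fun n => (dist_triangle4 _ _ _ _).trans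
      (add_le_add_three (htz n) (hlip n _ (htA n) t₀ ht₀) le_rfl)
  have hzero :
      Tendsto (fun n => δ n + (L * dist (t n) t₀ + δ n) + dist (g n t₀) (f t₀)) U (𝓝 0) := by
    simpa using
      (hδU.add (((ht.dist (tendsto_const_nhds (x := t₀))).const_mul (L : ℝ)).add hδU)).add
        ((hf t₀ ht₀).dist (tendsto_const_nhds (x := f t₀)))
  exact ⟨t₀, ht₀, (dist_le_zero.1 (ge_of_tendsto hzero (Eventually.of_forall hbound))).symm⟩

theorem stmt_10_general {n : ℕ}
    (K : Set (EuclideanSpace ℝ (Fin n)))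
    (hcpt : IsCompact K) (hconn : IsConnected K)
    (hfin : μH[1] K < ⊤) :
    ∃ f : ℝ → EuclideanSpace ℝ (Fin n), ∃ C : NNReal,
      LipschitzOnWith C f (Set.Icc 0 1) ∧ f '' Set.Icc (0:ℝ) 1 = K := by
  choose g hgK hcov hlip using fun k : ℕ =>
    hcpt.exists_approx_curve hconn hfin.ne (ε := (k + 1 : ℝ≥0)⁻¹) (by positivity)
  have hδ : Tendsto (fun k : ℕ => 2 * ((k + 1 : ℝ≥0)⁻¹ : ℝ)) atTop (𝓝 0) := by
    simpa using tendsto_one_div_add_atTop_nhds_zero_nat.const_mul (2 : ℝ)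
  obtain ⟨f, hf, hfK⟩ := exists_lipschitzOnWith_image_eq_of_tendsto isCompact_Icc hcpt
    (L := 8 * (μH[1] K).toNNReal) g hδ hgK
    (fun k z hz => (hcov k z hz).imp fun t ⟨ht, h⟩ =>
      ⟨ht, h.trans (le_mul_of_one_le_left (by positivity) one_le_two)⟩)
    (by simpa [ENNReal.coe_toNNReal_eq_toReal] using hlip)
  exact ⟨f, _, hf, hfK⟩

theorem stmt_10 {n : ℕ}
    (K : Set (EuclideanSpace ℝ (Fin n)))
    (hne : K.Nonempty) (hcpt : IsCompact K) (hconn : IsConnected K)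
    (hfin : μH[1] K < ⊤) :
    ∃ f : ℝ → EuclideanSpace ℝ (Fin n), ∃ C : NNReal,
      LipschitzOnWith C f (Set.Icc 0 1) ∧ f '' Set.Icc (0:ℝ) 1 = K :=
  stmt_10_general K hcpt hconn hfin
end
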